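/- Let G be a connected graph such that M = B(G) is a connected matroid with ground set E, and let (A, E - A) be a 2-separation of M such that every series pair of M is contained entirely in A or entirely in E - A. Then either V(A) ∩ V(E - A) consists of a single vertex, or one of G[A] or G[E - A] is a path whose end-vertices are exactly the vertices of V(A) ∩ V(E - A). -/

import Mathlib

open Matroid Set

namespace Bicirc

variable {α : Type*}

/-- A circuit of a matroid: a minimal dependent set. -/
def Circ (M : Matroid α) (C : Set α) : Prop :=
  M.Dep C ∧ ∀ D, D ⊂ C → M.Indep D

/-- A cocircuit: a circuit of the dual matroid. -/
def Cocirc (M : Matroid α) (C : Set α) : Prop := Circ M✶ C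

/-- Deletion of a set from a matroid. -/
def Del (M : Matroid α) (X : Set α) : Matroid α := M ↾ (M.E \ X)

/-- `e` is a loop of the matroid `M`. -/
def IsLoopE (M : Matroid α) (e : α) : Prop := Circ M {e}

/-- `e` is a coloop of the matroid `M`. -/
def IsColoopE (M : Matroid α) (e : α) : Prop := Cocirc M {e}

/-- A single element is a separator iff it is a loop or a coloop. -/
def SepElem (M : Matroid α) (e : α) : Prop := IsLoopE M e ∨ IsColoopE M e

/-- The rank of a set in a matroid (as a natural number). -/
noncomputable def rk (M : Matroid α) (X : Set α) : ℕ :=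
  sSup {n | ∃ I, M.Indep I ∧ I ⊆ X ∧ n = I.ncard}

/-- The rank of a matroid. -/
noncomputable def rkM (M : Matroid α) : ℕ := rk M M.E

/-- A matroid is connected if it is nonempty and every two distinct elements
lie in a common circuit. -/
def MConn (M : Matroid α) : Prop :=
  M.E.Nonempty ∧ ∀ e ∈ M.E, ∀ f ∈ M.E, e ≠ f → ∃ C, Circ M C ∧ e ∈ C ∧ f ∈ C

/-- `A` gives a `k`-separation `(A, M.E \ A)` of `M`. -/
def KSep (M : Matroid α) (k : ℕ) (A : Set α) : Prop :=
  A ⊆ M.E ∧ k ≤ A.ncard ∧ k ≤ (M.E \ A).ncard ∧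
    rk M A + rk M (M.E \ A) < rkM M + k

/-- A matroid is 3-connected if it has no `k`-separation for `k < 3`. -/
def ThreeConn (M : Matroid α) : Prop := ∀ k, 0 < k → k < 3 → ∀ A, ¬ KSep M k A

/-- Every pair of distinct elements of `C` lies in a common circuit of `M | C`. -/
def PairConn (M : Matroid α) (C : Set α) : Prop :=
  C ⊆ M.E ∧ ∀ e ∈ C, ∀ f ∈ C, e ≠ f → ∃ K, Circ (M ↾ C) K ∧ e ∈ K ∧ f ∈ K

/-- `C` is a connected component of the matroid `M`. -/
def IsComp (M : Matroid α) (C : Set α) : Prop :=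
  C.Nonempty ∧ PairConn M C ∧ ∀ D, PairConn M D → C ⊆ D → D = C

/-- A non-separating cocircuit: deleting it leaves a connected matroid. -/
def NonSepCocirc (M : Matroid α) (K : Set α) : Prop :=
  Cocirc M K ∧ MConn (Del M K)

/-- A cyclic flat: a flat whose restriction has no coloops. -/
def CyclicFlat (M : Matroid α) (Z : Set α) : Prop :=
  M.IsFlat Z ∧ ∀ e ∈ Z, ¬ IsColoopE (M ↾ Z) e

/-- `e` and `f` are clones: every cyclic flat contains one iff it contains the other. -/
def Clones (M : Matroid α) (e f : α) : Prop :=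
  ∀ Z, CyclicFlat M Z → (e ∈ Z ↔ f ∈ Z)

/-- A clonal class: a maximal set of pairwise clone elements. -/
def ClonalClass (M : Matroid α) (F : Set α) : Prop :=
  F ⊆ M.E ∧ (∀ e ∈ F, ∀ f ∈ F, Clones M e f) ∧
    ∀ F', F' ⊆ M.E → (∀ e ∈ F', ∀ f ∈ F', Clones M e f) → F ⊆ F' → F' = F

/-- Disjoint sets `X`, `Y` are skew: no circuit of `M` inside `X ∪ Y` meets both. -/
def Skew (M : Matroid α) (X Y : Set α) : Prop :=
  ∀ C, Circ M C → C ⊆ X ∪ Y → (C ∩ X = ∅ ∨ C ∩ Y = ∅)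

/-- A good cocircuit. -/
def GoodCocirc (M : Matroid α) (K : Set α) : Prop :=
  Cocirc M K ∧ (∃! D, IsComp (Del M K) D ∧ 1 < D.ncard) ∧
    ∀ x, IsColoopE (Del M K) x → ∀ D, IsComp (Del M K) D → 1 < D.ncard →
      ∃ F C, ClonalClass M F ∧ rk M F = 2 ∧ F ⊆ K ∧ Circ M C ∧ x ∈ C ∧
        C ∩ K ⊆ F ∧ (C ∩ K).ncard = 2 ∧ (C ∩ D).Nonempty

/-! ### Multigraphs -/

/-- A multigraph on vertex type `V` with edge type `E`: each edge has a pair of ends. -/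
structure MGraph (V : Type*) (E : Type*) where
  ends : E → Sym2 V

variable {V E : Type*}

/-- The vertices incident with at least one edge of `X`. -/
def VX (G : MGraph V E) (X : Set E) : Set V := {v | ∃ e ∈ X, v ∈ G.ends e}

/-- The set of edges incident with the vertex `v`. -/
def star (G : MGraph V E) (v : V) : Set E := {e | v ∈ G.ends e}

/-- The degree of `v` in the edge set `X` (loops count twice). -/
noncomputable def deg (G : MGraph V E) (X : Set E) (v : V) : ℕ :=
  ({e ∈ X | v ∈ G.ends e}).ncard + ({e ∈ X | G.ends e = s(v, v)}).ncard

/-- Two edges of `X` sharing a vertex. -/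
def EAdj (G : MGraph V E) (X : Set E) (a b : E) : Prop :=
  a ∈ X ∧ b ∈ X ∧ ∃ v, v ∈ G.ends a ∧ v ∈ G.ends b

/-- The subgraph `G[X]` is connected. -/
def ConnOn (G : MGraph V E) (X : Set E) : Prop :=
  ∀ a ∈ X, ∀ b ∈ X, Relation.ReflTransGen (EAdj G X) a b

/-- `C` is the edge set of a cycle of `G`. -/
def IsCycle (G : MGraph V E) (C : Set E) : Prop :=
  C.Nonempty ∧ ConnOn G C ∧ ∀ v ∈ VX G C, deg G C v = 2

/-- `X` contains no cycle. -/
def Acyclic (G : MGraph V E) (X : Set E) : Prop := ∀ C, C ⊆ X → ¬ IsCycle G C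

/-- `X` contains two distinct cycles. -/
def TwoCycles (G : MGraph V E) (X : Set E) : Prop :=
  ∃ C₁ C₂, C₁ ⊆ X ∧ C₂ ⊆ X ∧ IsCycle G C₁ ∧ IsCycle G C₂ ∧ C₁ ≠ C₂

/-- A bicycle: a minimal edge set inducing a connected subgraph with more than one cycle. -/
def IsBicycle (G : MGraph V E) (X : Set E) : Prop :=
  (ConnOn G X ∧ TwoCycles G X) ∧ ∀ Y, Y ⊂ X → ¬ (ConnOn G Y ∧ TwoCycles G Y)

/-- `P` is the edge set of a path of `G` with end-vertices `u` and `v`. -/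
def IsPathBtw (G : MGraph V E) (P : Set E) (u v : V) : Prop :=
  P.Nonempty ∧ ConnOn G P ∧ Acyclic G P ∧ u ≠ v ∧
    deg G P u = 1 ∧ deg G P v = 1 ∧ ∀ w ∈ VX G P, deg G P w ≤ 2

/-- `X` induces a theta subgraph of `G`. -/
def IsTheta (G : MGraph V E) (X : Set E) : Prop :=
  ∃ u v P₁ P₂ P₃, u ≠ v ∧
    IsPathBtw G P₁ u v ∧ IsPathBtw G P₂ u v ∧ IsPathBtw G P₃ u v ∧
    P₁ ∩ P₂ = ∅ ∧ P₁ ∩ P₃ = ∅ ∧ P₂ ∩ P₃ = ∅ ∧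
    VX G P₁ ∩ VX G P₂ = {u, v} ∧ VX G P₁ ∩ VX G P₃ = {u, v} ∧
    VX G P₂ ∩ VX G P₃ = {u, v} ∧ X = P₁ ∪ P₂ ∪ P₃

/-- `X` induces a loose handcuff of `G`. -/
def IsLooseHandcuff (G : MGraph V E) (X : Set E) : Prop :=
  ∃ C₁ C₂ P u v, IsCycle G C₁ ∧ IsCycle G C₂ ∧ VX G C₁ ∩ VX G C₂ = ∅ ∧
    IsPathBtw G P u v ∧ VX G P ∩ VX G C₁ = {u} ∧ VX G P ∩ VX G C₂ = {v} ∧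
    P ∩ C₁ = ∅ ∧ P ∩ C₂ = ∅ ∧ X = C₁ ∪ C₂ ∪ P

/-- `X` induces a tight handcuff of `G`. -/
def IsTightHandcuff (G : MGraph V E) (X : Set E) : Prop :=
  ∃ C₁ C₂ v, IsCycle G C₁ ∧ IsCycle G C₂ ∧ C₁ ∩ C₂ = ∅ ∧
    VX G C₁ ∩ VX G C₂ = {v} ∧ X = C₁ ∪ C₂

/-- Vertex adjacency via an edge. -/
def VAdj (G : MGraph V E) (u w : V) : Prop := ∃ e, u ∈ G.ends e ∧ w ∈ G.ends e

/-- The graph `G` is connected. -/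
def GConn (G : MGraph V E) : Prop := ∀ u w : V, Relation.ReflTransGen (VAdj G) u w

/-- The graph `G - x` is connected. -/
def ConnAvoid (G : MGraph V E) (x : V) : Prop :=
  ∀ u w : V, u ≠ x → w ≠ x →
    Relation.ReflTransGen
      (fun a b => a ≠ x ∧ b ≠ x ∧ ∃ e, x ∉ G.ends e ∧ a ∈ G.ends e ∧ b ∈ G.ends e) u w

/-- `G` is 2-connected: connected and with no cutvertex. -/
def TwoConnGraph (G : MGraph V E) : Prop := GConn G ∧ ∀ x, ConnAvoid G x

/-- `C` is (the edge set of) a connected component of `G[X]`. -/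
def IsGComp (G : MGraph V E) (X C : Set E) : Prop :=
  C ⊆ X ∧ C.Nonempty ∧ ConnOn G C ∧
    ∀ D, D ⊆ X → D.Nonempty → ConnOn G D → C ⊆ D → D = C

/-- The number of acyclic components of `G[X]`. -/
noncomputable def numAcyclicComps (G : MGraph V E) (X : Set E) : ℕ :=
  {C | IsGComp G X C ∧ Acyclic G C}.ncard

/-- `M` is the bicircular matroid of `G`: its circuits are precisely the bicycles. -/
def IsBicircOf (G : MGraph V E) (M : Matroid E) : Prop :=
  M.E = Set.univ ∧ ∀ C, Circ M C ↔ IsBicycle G C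

/-- The edge set `X` contains a pendent edge. -/
def PendentEdge (G : MGraph V E) (X : Set E) : Prop :=
  ∃ e ∈ X, ∃ w ∈ G.ends e, deg G X w = 1

/-- The graph `G - v` is a cycle. -/
def DelVIsCycle (G : MGraph V E) (v : V) : Prop :=
  IsCycle G {e | v ∉ G.ends e} ∧ ∀ w, w ≠ v → w ∈ VX G {e | v ∉ G.ends e}

/-! ### Matroid-labelled trees -/

/-- A matroid-labelled tree. -/
structure MTree (α : Type*) where
  ι : Type
  fin : Fintype ι
  lab : ι → Matroid α
  adj : ι → ι → Prop
  symm : ∀ i j, adj i j → adj j i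
  loopless : ∀ i, ¬ adj i i
  conn : ∀ i j, Relation.ReflTransGen adj i j
  acyc : ∀ i j, adj i j →
    ¬ Relation.ReflTransGen
        (fun a b => adj a b ∧ ¬(a = i ∧ b = j) ∧ ¬(a = j ∧ b = i)) i j
  card3 : (∃ i j : ι, i ≠ j) → ∀ i, 3 ≤ (lab i).E.ncard
  disj : ∀ i j, i ≠ j → ¬ adj i j → (lab i).E ∩ (lab j).E = ∅
  meet : ∀ i j, adj i j →
    ∃ e, (lab i).E ∩ (lab j).E = {e} ∧ ¬ SepElem (lab i) e ∧ ¬ SepElem (lab j) e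

/-- The basepoint elements of a matroid-labelled tree. -/
def MTree.bpts (T : MTree α) : Set α :=
  {e | ∃ i j, T.adj i j ∧ e ∈ (T.lab i).E ∧ e ∈ (T.lab j).E}

/-- The ground set of the matroid `M(T)`. -/
def MTree.ground (T : MTree α) : Set α := (⋃ i, (T.lab i).E) \ T.bpts

/-- The ground-set elements appearing in nodes of `S`. -/
def MTree.elems (T : MTree α) (S : Set T.ι) : Set α :=
  (⋃ i ∈ S, (T.lab i).E) ∩ T.ground

/-- `S` induces a connected subgraph of the tree. -/
def MTree.SubConn (T : MTree α) (S : Set T.ι) : Prop :=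
  ∀ i ∈ S, ∀ j ∈ S,
    Relation.ReflTransGen (fun a b => a ∈ S ∧ b ∈ S ∧ T.adj a b) i j

/-- The circuits of the matroid `M(T)`: glued along a connected subtree. -/
def MTree.IsTreeCircuit (T : MTree α) (C : Set α) : Prop :=
  ∃ (S : Set T.ι) (f : T.ι → Set α), S.Nonempty ∧ T.SubConn S ∧
    (∀ i ∈ S, Circ (T.lab i) (f i)) ∧
    (∀ i ∈ S, ∀ j, T.adj i j → ∀ e, e ∈ (T.lab i).E → e ∈ (T.lab j).E →
      (e ∈ f i ↔ j ∈ S)) ∧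
    C = (⋃ i ∈ S, f i) \ T.bpts

/-- `M = M(T)`. -/
def MTree.IsDecompOf (T : MTree α) (M : Matroid α) : Prop :=
  M.E = T.ground ∧ ∀ C, Circ M C ↔ T.IsTreeCircuit C

/-- A node whose matroid is a circuit. -/
def MTree.CircNode (T : MTree α) (i : T.ι) : Prop := Circ (T.lab i) (T.lab i).E

/-- A node whose matroid is a cocircuit. -/
def MTree.CocircNode (T : MTree α) (i : T.ι) : Prop := Cocirc (T.lab i) (T.lab i).E

/-- `T` is the canonical (Cunningham–Edmonds) decomposition tree of `M`. -/
def MTree.IsCanonical (T : MTree α) (M : Matroid α) : Prop :=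
  T.IsDecompOf M ∧
    (∀ i, ThreeConn (T.lab i) ∨ T.CircNode i ∨ T.CocircNode i) ∧
    ∀ i j, T.adj i j →
      ¬(T.CircNode i ∧ T.CircNode j) ∧ ¬(T.CocircNode i ∧ T.CocircNode j)

/-- The component of `T` minus the edge `{i, j}` containing `i`. -/
def MTree.side (T : MTree α) (i j : T.ι) : Set T.ι :=
  {k | Relation.ReflTransGen
        (fun a b => T.adj a b ∧ ¬(a = i ∧ b = j) ∧ ¬(a = j ∧ b = i)) i k}

/-- `(A, B)` is displayed by an edge of `T`. -/
def MTree.DispEdge (T : MTree α) (A B : Set α) : Prop :=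
  ∃ i j, T.adj i j ∧ A = T.elems (T.side i j) ∧ B = T.elems (T.side j i)

/-- The component of `T - n` containing `k`. -/
def MTree.compAvoid (T : MTree α) (n k : T.ι) : Set T.ι :=
  {k' | Relation.ReflTransGen (fun a b => T.adj a b ∧ a ≠ n ∧ b ≠ n) k k'}

/-- `(A, B)` is displayed by the node `n` of `T`. -/
def MTree.DispNode (T : MTree α) (n : T.ι) (A B : Set α) : Prop :=
  A ∪ B = T.ground ∧ A ∩ B = ∅ ∧
    ∀ k, k ≠ n →
      (T.elems (T.compAvoid n k) ⊆ A ∨ T.elems (T.compAvoid n k) ⊆ B)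

/-- `(A, B)` is a 2-separation of `M`. -/
def TwoSep (M : Matroid α) (A B : Set α) : Prop :=
  A ∪ B = M.E ∧ A ∩ B = ∅ ∧ 2 ≤ A.ncard ∧ 2 ≤ B.ncard ∧
    rk M A + rk M B ≤ rkM M + 1

/-- `X` is 2-separating in `M`. -/
def SepSet2 (M : Matroid α) (X : Set α) : Prop :=
  rk M X + rk M (M.E \ X) ≤ rkM M + 1

/-- A wedge relative to `A`: a maximal 2-separating nonempty proper subset of `M.E \ A`. -/
def Wedge (M : Matroid α) (A X : Set α) : Prop :=
  X ⊆ M.E \ A ∧ X.Nonempty ∧ X ≠ M.E \ A ∧ SepSet2 M X ∧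
    ∀ Y, Y ⊆ M.E \ A → Y.Nonempty → Y ≠ M.E \ A → SepSet2 M Y → X ⊆ Y → Y = X

/-- The rooted matroid `(N, L)` is bicircular: `N = B(H)` for some finite multigraph `H`
in which every element of `L` is a loop. -/
def RootedBicirc (N : Matroid α) (L : Set α) : Prop :=
  ∃ (V : Type) (_ : Fintype V) (_ : N.E.Finite) (G : MGraph V ↥N.E),
    (∀ D, Circ N D ↔ ∃ C : Set ↥N.E, IsBicycle G C ∧ D = Subtype.val '' C) ∧
    ∀ l : ↥N.E, l.1 ∈ L → (G.ends l).IsDiag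

end Bicirc

/-!
The rank of an edge set `X` in `B(G)` is `|V(X)|` minus the number of acyclic components of
`G[X]`. We only use three consequences: `r(M) ≤ |V|`, `2 r(X) ≥ 2 |V(X)| - |leaves(X)|` (a tree
has at least two leaves), and `r(X) ≥ |V(X)|` when every component of `G[X]` has a cycle.

As `M` is connected, every edge lies in a bicycle, so `G` has no vertex of degree one. Hence the
leaves of `G[A]` and of `G[E - A]` lie in the boundary `V(A) ∩ V(E - A)`, and no vertex is a
leaf of both sides, as its two edges would form a series pair meeting both sides. Adding up the
rank bounds, the 2-separation inequality leaves room for at most two boundary vertices, and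
there is at least one since some bicycle meets both sides. If there are two, the same count shows
that some side has an acyclic component; its leaves then fill the boundary, every component of
that side meets the boundary, so the side is this single tree, and having just two leaves it is a
path.
-/

namespace Bicirc

open Relation

variable {V E : Type*} {G : MGraph V E} {A C D I J K X Y Z : Set E} {e f g : E}
  {p q u v w : V}

/-! ### Degrees and leaves -/

def incEdges (G : MGraph V E) (X : Set E) (v : V) : Set E := {e ∈ X | v ∈ G.ends e}

def loopEdges (G : MGraph V E) (X : Set E) (v : V) : Set E := {e ∈ X | G.ends e = s(v, v)}

def leaves (G : MGraph V E) (X : Set E) : Set V := {v | deg G X v = 1}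

lemma mem_leaves : v ∈ leaves G X ↔ deg G X v = 1 := Iff.rfl

lemma deg_eq_ncard_add_ncard : deg G X v = (incEdges G X v).ncard + (loopEdges G X v).ncard :=
  rfl

lemma VX_mono (h : X ⊆ Y) : VX G X ⊆ VX G Y := fun _ ⟨e, he, hv⟩ => ⟨e, h he, hv⟩

lemma VX_union : VX G (X ∪ Y) = VX G X ∪ VX G Y := by
  ext v
  simp only [VX, mem_union]
  constructor
  · rintro ⟨e, he | he, hv⟩
    exacts [Or.inl ⟨e, he, hv⟩, Or.inr ⟨e, he, hv⟩]
  · rintro (⟨e, he, hv⟩ | ⟨e, he, hv⟩)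
    exacts [⟨e, Or.inl he, hv⟩, ⟨e, Or.inr he, hv⟩]

lemma ends_eq_of_isDiag (hd : (G.ends e).IsDiag) (hv : v ∈ G.ends e) : G.ends e = s(v, v) := by
  rw [← Sym2.other_spec hv] at hd ⊢
  rw [← Sym2.mk_isDiag_iff.1 hd]

lemma eq_of_mem_ends_of_ne (hw : w ∈ G.ends e) (hu : u ∈ G.ends e) (huw : u ≠ w)
    (hv : v ∈ G.ends e) (hvw : v ≠ w) : u = v := by
  rw [← Sym2.other_spec hw, Sym2.mem_iff] at hu hv
  grind

lemma mem_VX_singleton : v ∈ VX G {e} ↔ v ∈ G.ends e := by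
  simp [VX]

lemma deg_singleton_of_not_isDiag (hv : v ∈ G.ends e) (hnd : ¬(G.ends e).IsDiag) :
    deg G {e} v = 1 := by
  have hinc : incEdges G {e} v = {e} := by
    ext f; simp +contextual [incEdges, hv]
  have hloop : loopEdges G {e} v = ∅ := by
    ext f
    simp only [loopEdges, mem_singleton_iff, mem_empty_iff_false, iff_false]
    rintro ⟨rfl, hf⟩
    exact hnd (by rw [hf]; exact Sym2.mk_isDiag_iff.2 rfl)
  rw [deg_eq_ncard_add_ncard, hinc, hloop, ncard_singleton, ncard_empty]

lemma deg_singleton_of_loop (hd : G.ends e = s(v, v)) : deg G {e} v = 2 := by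
  have hinc : incEdges G {e} v = {e} := by
    ext f; simp +contextual [incEdges, hd]
  have hloop : loopEdges G {e} v = {e} := by
    ext f; simp +contextual [loopEdges, hd]
  rw [deg_eq_ncard_add_ncard, hinc, hloop, ncard_singleton]

lemma ncard_eq_sum_ite [Fintype V] (s : Set V) [DecidablePred (· ∈ s)] :
    s.ncard = ∑ v, if v ∈ s then 1 else 0 := by
  rw [Finset.sum_boole, Nat.cast_id, ncard_eq_toFinset_card']
  congr 1
  ext v
  simp

section Finite

variable [Finite E]

lemma deg_mono (h : X ⊆ Y) : deg G X v ≤ deg G Y v :=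
  Nat.add_le_add (ncard_le_ncard fun _ he => ⟨h he.1, he.2⟩)
    (ncard_le_ncard fun _ he => ⟨h he.1, he.2⟩)

lemma deg_union_of_disjoint (h : Disjoint X Y) :
    deg G (X ∪ Y) v = deg G X v + deg G Y v := by
  have hinc : incEdges G (X ∪ Y) v = incEdges G X v ∪ incEdges G Y v := by
    ext e; simp [incEdges, or_and_right]
  have hloop : loopEdges G (X ∪ Y) v = loopEdges G X v ∪ loopEdges G Y v := by
    ext e; simp [loopEdges, or_and_right]
  rw [deg_eq_ncard_add_ncard, deg_eq_ncard_add_ncard, deg_eq_ncard_add_ncard, hinc, hloop,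
    ncard_union_eq (h.mono (fun _ he => he.1) (fun _ he => he.1)),
    ncard_union_eq (h.mono (fun _ he => he.1) (fun _ he => he.1))]
  ring

lemma deg_diff_singleton_add (he : e ∈ X) : deg G (X \ {e}) v + deg G {e} v = deg G X v := by
  rw [← deg_union_of_disjoint disjoint_sdiff_left, sdiff_union_self,
    union_eq_self_of_subset_right (singleton_subset_iff.2 he)]

lemma deg_pos_iff : 0 < deg G X v ↔ v ∈ VX G X := by
  have : (loopEdges G X v).ncard ≤ (incEdges G X v).ncard :=
    ncard_le_ncard fun e he => ⟨he.1, by rw [he.2]; exact Sym2.mem_mk_left v v⟩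
  rw [deg_eq_ncard_add_ncard, show v ∈ VX G X ↔ (incEdges G X v).Nonempty from Iff.rfl,
    ← ncard_pos]
  omega

lemma deg_eq_zero_iff : deg G X v = 0 ↔ v ∉ VX G X := by
  rw [← deg_pos_iff, Nat.pos_iff_ne_zero, not_not]

lemma mem_VX_of_mem_leaves (h : v ∈ leaves G X) : v ∈ VX G X :=
  deg_pos_iff.1 (by rw [h]; exact one_pos)

lemma deg_singleton_of_notMem (hv : v ∉ G.ends e) : deg G {e} v = 0 :=
  deg_eq_zero_iff.2 (mt mem_VX_singleton.1 hv)

lemma two_le_deg_of_ne (he : e ∈ X) (hf : f ∈ X) (hfe : f ≠ e) (hve : v ∈ G.ends e)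
    (hvf : v ∈ G.ends f) : 2 ≤ deg G X v := by
  have h := ncard_le_ncard (s := {e, f}) (t := incEdges G X v) (by
    rintro g (rfl | rfl)
    exacts [⟨he, hve⟩, ⟨hf, hvf⟩])
  rw [ncard_pair hfe.symm] at h
  rw [deg_eq_ncard_add_ncard]
  omega

lemma two_le_deg_of_loop (he : e ∈ X) (hd : G.ends e = s(v, v)) : 2 ≤ deg G X v := by
  have h1 : 0 < (incEdges G X v).ncard :=
    (ncard_pos (toFinite _)).2 ⟨e, he, by rw [hd]; exact Sym2.mem_mk_left v v⟩
  have h2 : 0 < (loopEdges G X v).ncard := (ncard_pos (toFinite _)).2 ⟨e, he, hd⟩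
  rw [deg_eq_ncard_add_ncard]
  omega

lemma eq_of_deg_eq_one (h : deg G X w = 1) (he : e ∈ X) (hwe : w ∈ G.ends e) :
    (∀ f ∈ X, w ∈ G.ends f → f = e) ∧ ¬(G.ends e).IsDiag := by
  refine ⟨fun f hf hwf => by_contra fun hfe => ?_, fun hd => ?_⟩
  · have := two_le_deg_of_ne he hf hfe hwe hwf
    omega
  · have := two_le_deg_of_loop he (ends_eq_of_isDiag hd hwe)
    omega

lemma exists_ne_of_two_le_deg (hv : 2 ≤ deg G X v) (hnd : ¬(G.ends e).IsDiag) :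
    ∃ f ∈ X, f ≠ e ∧ v ∈ G.ends f := by
  by_contra! h
  have hinc : incEdges G X v ⊆ {e} := fun f hf => by_contra fun hfe => h f hf.1 hfe hf.2
  have hloop : loopEdges G X v = ∅ := by
    refine eq_empty_of_forall_notMem fun f hf => hnd ?_
    have hfe : f = e := hinc ⟨hf.1, by rw [hf.2]; exact Sym2.mem_mk_left v v⟩
    rw [← hfe, hf.2]
    exact Sym2.mk_isDiag_iff.2 rfl
  have := ncard_le_ncard hinc
  rw [deg_eq_ncard_add_ncard, hloop, ncard_empty] at hv
  rw [ncard_singleton] at this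
  omega

lemma sum_deg_singleton [Fintype V] (e : E) : ∑ v, deg G {e} v = 2 := by
  induction h : G.ends e using Sym2.ind with
  | _ a b =>
  by_cases hab : a = b
  · subst hab
    rw [Fintype.sum_eq_single a fun v hv => deg_singleton_of_notMem (by simp [h, hv]),
      deg_singleton_of_loop h]
  · have hnd : ¬(G.ends e).IsDiag := by rwa [h, Sym2.mk_isDiag_iff]
    rw [Fintype.sum_eq_add a b hab fun v hv => deg_singleton_of_notMem (by simp [h, hv.1, hv.2]),
      deg_singleton_of_not_isDiag (by simp [h]) hnd, deg_singleton_of_not_isDiag (by simp [h]) hnd]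

theorem sum_deg [Fintype V] (G : MGraph V E) (X : Set E) : ∑ v, deg G X v = 2 * X.ncard := by
  induction X using WellFoundedLT.induction with
  | _ X ih =>
  obtain rfl | ⟨e, he⟩ := X.eq_empty_or_nonempty
  · simp [deg_eq_zero_iff, VX]
  · simp only [← deg_diff_singleton_add he, Finset.sum_add_distrib, sum_deg_singleton,
      ih _ (sdiff_singleton_ssubset.2 he)]
    have := ncard_sdiff_singleton_add_one he
    omega

variable [Finite V]

theorem two_mul_ncard_VX_add_le (G : MGraph V E) (X : Set E) :
    2 * (VX G X).ncard + {v | 3 ≤ deg G X v}.ncard ≤ 2 * X.ncard + (leaves G X).ncard := by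
  classical
  have := Fintype.ofFinite V
  rw [← sum_deg G X, ncard_eq_sum_ite, ncard_eq_sum_ite, ncard_eq_sum_ite, Finset.mul_sum,
    ← Finset.sum_add_distrib, ← Finset.sum_add_distrib]
  refine Finset.sum_le_sum fun v _ => ?_
  split_ifs <;> simp only [mem_leaves, mem_ofPred_eq, ← deg_pos_iff] at * <;> omega

theorem two_mul_ncard_add_ncard_leaves (hX : ∀ v, deg G X v ≤ 2) :
    2 * X.ncard + (leaves G X).ncard = 2 * (VX G X).ncard := by
  classical
  have := Fintype.ofFinite V
  rw [← sum_deg G X, ncard_eq_sum_ite, ncard_eq_sum_ite, Finset.mul_sum,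
    ← Finset.sum_add_distrib]
  refine Finset.sum_congr rfl fun v _ => ?_
  have := hX v
  split_ifs <;> simp only [mem_leaves, ← deg_pos_iff] at * <;> omega

end Finite

/-! ### Components -/

lemma EAdj.symm (h : EAdj G X e f) : EAdj G X f e :=
  ⟨h.2.1, h.1, h.2.2.imp fun _ hv => hv.symm⟩

lemma EAdj.mono (hXY : X ⊆ Y) (h : EAdj G X e f) : EAdj G Y e f :=
  ⟨hXY h.1, hXY h.2.1, h.2.2⟩

lemma reflTransGen_eAdj_symm (h : ReflTransGen (EAdj G X) e f) : ReflTransGen (EAdj G X) f e := by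
  induction h with
  | refl => exact .refl
  | tail _ hcd ih => exact ih.head hcd.symm

lemma reflTransGen_eAdj_mono (hXY : X ⊆ Y) (h : ReflTransGen (EAdj G X) e f) :
    ReflTransGen (EAdj G Y) e f :=
  ReflTransGen.mono (fun _ _ => EAdj.mono hXY) _ _ h

/-- The edge set of the component of `G[X]` containing `e`, empty if `e ∉ X`. -/
def component (G : MGraph V E) (X : Set E) (e : E) : Set E :=
  {f | f ∈ X ∧ ReflTransGen (EAdj G X) e f}

lemma mem_component_self (he : e ∈ X) : e ∈ component G X e := ⟨he, .refl⟩

lemma component_subset : component G X e ⊆ X := fun _ hf => hf.1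

lemma connOn_component : ConnOn G (component G X e) := by
  have lift : ∀ f, ReflTransGen (EAdj G X) e f → ReflTransGen (EAdj G (component G X e)) e f := by
    intro f h
    induction h with
    | refl => exact .refl
    | tail hec hcd ih => exact ih.tail ⟨⟨hcd.1, hec⟩, ⟨hcd.2.1, hec.tail hcd⟩, hcd.2.2⟩
  intro a ha b hb
  exact (reflTransGen_eAdj_symm (lift a ha.2)).trans (lift b hb.2)

lemma mem_component_of_mem_VX (hv : v ∈ VX G (component G X e)) (hf : f ∈ X)
    (hvf : v ∈ G.ends f) : f ∈ component G X e := by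
  obtain ⟨g, hg, hvg⟩ := hv
  exact ⟨hf, hg.2.tail ⟨hg.1, hf, v, hvg, hvf⟩⟩

lemma component_eq_of_mem (hf : f ∈ component G X e) : component G X f = component G X e := by
  ext g
  exact ⟨fun hg => ⟨hg.1, hf.2.trans hg.2⟩,
    fun hg => ⟨hg.1, (reflTransGen_eAdj_symm hf.2).trans hg.2⟩⟩

lemma component_eq_of_mem_VX (he : v ∈ VX G (component G X e))
    (hf : v ∈ VX G (component G X f)) : component G X f = component G X e := by
  obtain ⟨g, hg, hvg⟩ := hf
  rw [← component_eq_of_mem hg, component_eq_of_mem (mem_component_of_mem_VX he hg.1 hvg)]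

lemma disjoint_VX_component_diff :
    Disjoint (VX G (component G X e)) (VX G (X \ component G X e)) :=
  disjoint_left.2 fun _ hv ⟨_, hf, hvf⟩ => hf.2 (mem_component_of_mem_VX hv hf.1 hvf)

lemma component_diff_component (hf : f ∈ X \ component G X e) :
    component G (X \ component G X e) f = component G X f := by
  refine Subset.antisymm (fun g hg => ⟨hg.1.1, reflTransGen_eAdj_mono sdiff_subset hg.2⟩) ?_
  rintro g ⟨-, hfg⟩
  induction hfg with
  | refl => exact mem_component_self hf
  | @tail c d _ hcd ih =>
    obtain ⟨-, hdX, v, hvc, hvd⟩ := hcd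
    have hd : d ∉ component G X e := fun hd =>
      ih.1.2 (mem_component_of_mem_VX ⟨d, hd, hvd⟩ ih.1.1 hvc)
    exact ⟨⟨hdX, hd⟩, ih.2.tail ⟨ih.1, ⟨hdX, hd⟩, v, hvc, hvd⟩⟩

lemma VX_component_union_diff (e : E) :
    VX G X = VX G (component G X e) ∪ VX G (X \ component G X e) := by
  rw [← VX_union, union_sdiff_cancel component_subset]

lemma ncard_VX_component_add [Finite V] (e : E) :
    (VX G (component G X e)).ncard + (VX G (X \ component G X e)).ncard = (VX G X).ncard := by
  rw [← ncard_union_eq disjoint_VX_component_diff, ← VX_component_union_diff]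

lemma deg_component (hv : v ∈ VX G (component G X e)) :
    deg G (component G X e) v = deg G X v := by
  have hinc : incEdges G (component G X e) v = incEdges G X v :=
    Subset.antisymm (fun f hf => ⟨hf.1.1, hf.2⟩)
      fun f hf => ⟨mem_component_of_mem_VX hv hf.1 hf.2, hf.2⟩
  have hloop : loopEdges G (component G X e) v = loopEdges G X v :=
    Subset.antisymm (fun f hf => ⟨hf.1.1, hf.2⟩) fun f hf =>
      ⟨mem_component_of_mem_VX hv hf.1 (by rw [hf.2]; exact Sym2.mem_mk_left v v), hf.2⟩
  rw [deg_eq_ncard_add_ncard, deg_eq_ncard_add_ncard, hinc, hloop]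

theorem induction_on_components [Finite E] {P : Set E → Prop} (X : Set E) (empty : P ∅)
    (step : ∀ X e, e ∈ X → P (X \ component G X e) → P X) : P X := by
  induction X using WellFoundedLT.induction with
  | _ X ih =>
  obtain rfl | ⟨e, he⟩ := X.eq_empty_or_nonempty
  · exact empty
  · exact step X e he (ih _ (sdiff_ssubset_left_iff.2 ⟨e, he, mem_component_self he⟩))

lemma ConnOn.subset_or_subset (hY : ConnOn G Y) (hYIJ : Y ⊆ I ∪ J)
    (hIJ : Disjoint (VX G I) (VX G J)) : Y ⊆ I ∨ Y ⊆ J := by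
  obtain rfl | ⟨a, ha⟩ := Y.eq_empty_or_nonempty
  · exact Or.inl (empty_subset _)
  have side : ∀ {I J : Set E}, Y ⊆ I ∪ J → Disjoint (VX G I) (VX G J) → a ∈ I → Y ⊆ I := by
    intro I J hYIJ hIJ haI b hb
    suffices ∀ c, ReflTransGen (EAdj G Y) a c → c ∈ I from this b (hY a ha b hb)
    intro c hc
    induction hc with
    | refl => exact haI
    | tail _ hcd ih =>
      obtain ⟨-, hd, v, hvc, hvd⟩ := hcd
      exact (hYIJ hd).resolve_right fun hdJ =>
        disjoint_left.1 hIJ ⟨_, ih, hvc⟩ ⟨_, hdJ, hvd⟩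
  rcases hYIJ ha with haI | haJ
  · exact Or.inl (side hYIJ hIJ haI)
  · exact Or.inr (side (union_comm I J ▸ hYIJ) hIJ.symm haJ)

lemma ConnOn.exists_adj (hX : ConnOn G X) (he : e ∈ X) (hf : f ∈ X) (hfe : f ≠ e) :
    ∃ g ∈ X, g ≠ e ∧ ∃ v ∈ G.ends g, v ∈ G.ends e := by
  suffices ∀ c, ReflTransGen (EAdj G X) f c → c ≠ f →
      ∃ g ∈ X, g ≠ c ∧ ∃ v ∈ G.ends g, v ∈ G.ends c from this e (hX f hf e he) hfe.symm
  intro c hc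
  induction hc with
  | refl => exact fun h => absurd rfl h
  | @tail c d _ hcd ih =>
    intro hdf
    by_cases hcd' : c = d
    · subst hcd'; exact ih hdf
    · exact ⟨c, hcd.1, hcd', hcd.2.2⟩

lemma ConnOn.VX_component_inter_nonempty (hZ : ConnOn G Z) (he : e ∈ Z) (heA : e ∈ A)
    (hf : f ∈ Z) (hfA : f ∉ A) : (VX G (component G A e) ∩ VX G (Z \ A)).Nonempty := by
  suffices ∀ b, ReflTransGen (EAdj G Z) e b →
      b ∈ component G A e ∨ (VX G (component G A e) ∩ VX G (Z \ A)).Nonempty from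
    (this f (hZ e he f hf)).resolve_left fun h => hfA h.1
  intro b hb
  induction hb with
  | refl => exact Or.inl (mem_component_self heA)
  | @tail c d _ hcd ih =>
    obtain ⟨-, hdZ, v, hvc, hvd⟩ := hcd
    refine ih.elim (fun hc => ?_) Or.inr
    by_cases hdA : d ∈ A
    · exact Or.inl (mem_component_of_mem_VX ⟨c, hc, hvc⟩ hdA hvd)
    · exact Or.inr ⟨v, ⟨c, hc, hvc⟩, d, ⟨hdZ, hdA⟩, hvd⟩

lemma ConnOn.diff_singleton (hX : ConnOn G X)
    (H : ∀ a ∈ X \ {e}, ∀ b ∈ X \ {e}, (∃ v ∈ G.ends e, v ∈ G.ends a) →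
      (∃ v ∈ G.ends e, v ∈ G.ends b) → ReflTransGen (EAdj G (X \ {e})) a b) :
    ConnOn G (X \ {e}) := by
  intro a ha b hb
  suffices ∀ c, ReflTransGen (EAdj G X) a c →
      (c ≠ e → ReflTransGen (EAdj G (X \ {e})) a c) ∧
      (c = e → ∃ d ∈ X \ {e}, ReflTransGen (EAdj G (X \ {e})) a d ∧ ∃ v ∈ G.ends e, v ∈ G.ends d)
    from (this b (hX a ha.1 b hb.1)).1 hb.2
  intro c hc
  induction hc with
  | refl => exact ⟨fun _ => .refl, fun hae => absurd hae ha.2⟩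
  | @tail c d _ hcd ih =>
    obtain ⟨hcX, hdX, v, hvc, hvd⟩ := hcd
    by_cases hce : c = e
    · obtain ⟨d', hd', had', v', hv'e, hv'd'⟩ := ih.2 hce
      subst hce
      refine ⟨fun hde => had'.trans (H d' hd' d ⟨hdX, hde⟩ ⟨v', hv'e, hv'd'⟩ ⟨v, hvc, hvd⟩),
        fun hde => ih.2 rfl⟩
    · refine ⟨fun hde => (ih.1 hce).tail ⟨⟨hcX, hce⟩, ⟨hdX, hde⟩, v, hvc, hvd⟩, ?_⟩
      rintro rfl
      exact ⟨c, ⟨hcX, hce⟩, ih.1 hce, v, hvd, hvc⟩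

lemma ConnOn.diff_singleton_of_forall (hX : ConnOn G X)
    (hu : ∀ a ∈ X \ {e}, ∀ v ∈ G.ends e, v ∈ G.ends a → v = u) : ConnOn G (X \ {e}) :=
  hX.diff_singleton fun a ha b hb ⟨v, hve, hva⟩ ⟨v', hv'e, hv'b⟩ =>
    .single ⟨ha, hb, u, hu a ha v hve hva ▸ hva, hu b hb v' hv'e hv'b ▸ hv'b⟩

lemma ConnOn.diff_singleton_of_isDiag (hX : ConnOn G X) (hd : (G.ends e).IsDiag) :
    ConnOn G (X \ {e}) := by
  obtain ⟨u, hu⟩ : ∃ u, u ∈ G.ends e := ⟨_, Sym2.out_fst_mem _⟩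
  refine hX.diff_singleton_of_forall (u := u) fun a _ v hve _ => ?_
  rw [ends_eq_of_isDiag hd hu] at hve
  simpa using hve

lemma ConnOn.diff_singleton_of_deg_eq_one [Finite E] (hX : ConnOn G X) (he : e ∈ X)
    (hw : w ∈ G.ends e) (h1 : deg G X w = 1) : ConnOn G (X \ {e}) := by
  refine hX.diff_singleton_of_forall (u := Sym2.Mem.other hw) fun a ha v hve hva => ?_
  have hvw : v ≠ w := fun hvw => ha.2 ((eq_of_deg_eq_one h1 he hw).1 a ha.1 (hvw ▸ hva))
  have := Sym2.other_spec hw ▸ hve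
  rw [Sym2.mem_iff] at this
  exact this.resolve_left hvw

/-! ### Cycles and the number of edges -/

section Finite

variable [Finite E]

lemma IsCycle.exists_ne (hC : IsCycle G C) (he : e ∈ C) (hv : v ∈ G.ends e)
    (hnd : ¬(G.ends e).IsDiag) : ∃ f ∈ C, f ≠ e ∧ v ∈ G.ends f :=
  exists_ne_of_two_le_deg (hC.2.2 v ⟨e, he, hv⟩).ge hnd

lemma ConnOn.VX_diff_singleton_of_isCycle (hX : ConnOn G X) (hC : IsCycle G C) (hCX : C ⊆ X)
    (he : e ∈ C) (hf : f ∈ X) (hfe : f ≠ e) : VX G (X \ {e}) = VX G X := by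
  refine Subset.antisymm (VX_mono sdiff_subset) fun v ⟨a, ha, hva⟩ => ?_
  by_cases hae : a = e
  · subst hae
    by_cases hd : (G.ends a).IsDiag
    · obtain ⟨b, hb, hba, v', hv'b, hv'a⟩ := hX.exists_adj ha hf hfe
      rw [ends_eq_of_isDiag hd hva, Sym2.mem_iff, or_self] at hv'a
      exact ⟨b, ⟨hb, hba⟩, hv'a ▸ hv'b⟩
    · obtain ⟨b, hb, hba, hvb⟩ := hC.exists_ne he hva hd
      exact ⟨b, ⟨hCX hb, hba⟩, hvb⟩
  · exact ⟨a, ⟨ha, hae⟩, hva⟩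

lemma ConnOn.VX_subset_insert_of_deg_eq_one (hX : ConnOn G X) (he : e ∈ X)
    (hw : w ∈ G.ends e) (h1 : deg G X w = 1) (hf : f ∈ X) (hfe : f ≠ e) :
    VX G X ⊆ insert w (VX G (X \ {e})) := by
  have honly := (eq_of_deg_eq_one h1 he hw).1
  rintro v ⟨a, ha, hva⟩
  by_cases hae : a = e
  · subst hae
    by_cases hvw : v = w
    · exact Or.inl hvw
    obtain ⟨b, hb, hba, v', hv'b, hv'a⟩ := hX.exists_adj ha hf hfe
    have hv'w : v' ≠ w := fun h => hba (honly b hb (h ▸ hv'b))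
    exact Or.inr ⟨b, ⟨hb, hba⟩, eq_of_mem_ends_of_ne hw hv'a hv'w hva hvw ▸ hv'b⟩
  · exact Or.inr ⟨a, ⟨ha, hae⟩, hva⟩

variable [Finite V]

/-- Otherwise the component of `C \ {e}` at `p` would have `p` as its only leaf, while leaves
come in pairs in a graph of maximum degree two. -/
lemma IsCycle.mem_VX_component_diff (hC : IsCycle G C) (he : e ∈ C) (hp : p ∈ G.ends e)
    (hq : q ∈ G.ends e) (hpq : p ≠ q) (hz : g ∈ C \ {e}) (hpz : p ∈ G.ends g) :
    q ∈ VX G (component G (C \ {e}) g) := by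
  set K := component G (C \ {e}) g
  have hnd : ¬(G.ends e).IsDiag := fun hd => hpq <| by
    rw [ends_eq_of_isDiag hd hp, Sym2.mem_iff, or_self] at hq
    exact hq.symm
  by_contra hqK
  have hpK : p ∈ VX G K := ⟨g, mem_component_self hz, hpz⟩
  have hdegC : ∀ v ∈ VX G K, deg G K v + deg G {e} v = 2 := fun v hv => by
    rw [deg_component hv, deg_diff_singleton_add he,
      hC.2.2 v (VX_mono (component_subset.trans sdiff_subset) hv)]
  have hdeg : ∀ v ∈ VX G K, v ≠ p → deg G K v = 2 := fun v hv hvp => by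
    have hve : v ∉ G.ends e := fun hve =>
      hqK (eq_of_mem_ends_of_ne hp hve hvp hq (Ne.symm hpq) ▸ hv)
    simpa [deg_singleton_of_notMem hve] using hdegC v hv
  have hdegp : deg G K p = 1 := by
    have := hdegC p hpK
    rw [deg_singleton_of_not_isDiag hp hnd] at this
    omega
  have hleaves : leaves G K = {p} := by
    refine Subset.antisymm (fun v hv => by_contra fun hvp => ?_) (singleton_subset_iff.2 hdegp)
    have := hdeg v (mem_VX_of_mem_leaves hv) hvp
    rw [mem_leaves] at hv
    omega
  have hmax : ∀ v, deg G K v ≤ 2 := fun v => by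
    by_cases hv : v ∈ VX G K
    · by_cases hvp : v = p
      · rw [hvp, hdegp]; omega
      · rw [hdeg v hv hvp]
    · rw [deg_eq_zero_iff.2 hv]; omega
  have := two_mul_ncard_add_ncard_leaves hmax
  rw [hleaves, ncard_singleton] at this
  omega

lemma ConnOn.diff_singleton_of_isCycle (hX : ConnOn G X) (hC : IsCycle G C) (hCX : C ⊆ X)
    (he : e ∈ C) : ConnOn G (X \ {e}) := by
  by_cases hd : (G.ends e).IsDiag
  · exact hX.diff_singleton_of_isDiag hd
  obtain ⟨p, hp⟩ : ∃ p, p ∈ G.ends e := ⟨_, Sym2.out_fst_mem _⟩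
  set q := Sym2.Mem.other hp
  have hq : q ∈ G.ends e := Sym2.other_mem hp
  have hpq : p ≠ q := (Sym2.other_ne hd hp).symm
  obtain ⟨g, hgC, hge, hpg⟩ := hC.exists_ne he hp hd
  set K := component G (C \ {e}) g
  have hKX : K ⊆ X \ {e} := component_subset.trans (sdiff_subset_sdiff_left hCX)
  have hends : ∀ v ∈ G.ends e, ∃ z ∈ K, v ∈ G.ends z := by
    intro v hv
    have : v = p ∨ v = q := by rwa [← Sym2.other_spec hp, Sym2.mem_iff] at hv
    rcases this with rfl | rfl
    · exact ⟨g, mem_component_self ⟨hgC, hge⟩, hpg⟩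
    · exact hC.mem_VX_component_diff he hp hq hpq ⟨hgC, hge⟩ hpg
  refine hX.diff_singleton fun a ha b hb ⟨v, hve, hva⟩ ⟨v', hv'e, hv'b⟩ => ?_
  obtain ⟨z, hz, hvz⟩ := hends v hve
  obtain ⟨z', hz', hv'z'⟩ := hends v' hv'e
  exact (ReflTransGen.single ⟨ha, hKX hz, v, hva, hvz⟩).trans
    ((reflTransGen_eAdj_mono hKX (connOn_component z hz z' hz')).trans
      (ReflTransGen.single ⟨hKX hz', hb, v', hv'z', hv'b⟩))

lemma ncard_add_one_le_of_forall_leaves_nonempty (hX : X.Nonempty)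
    (h : ∀ Y ⊆ X, Y.Nonempty → (leaves G Y).Nonempty) : X.ncard + 1 ≤ (VX G X).ncard := by
  induction X using WellFoundedLT.induction with
  | _ X ih =>
  obtain ⟨w, hw⟩ := h X subset_rfl hX
  obtain ⟨e, he, hwe⟩ := mem_VX_of_mem_leaves hw
  obtain ⟨honly, hnd⟩ := eq_of_deg_eq_one hw he hwe
  have hwX : w ∈ VX G X := ⟨e, he, hwe⟩
  have hcard := ncard_sdiff_singleton_add_one he
  obtain hX' | hX' := (X \ {e}).eq_empty_or_nonempty
  · have hsub : {w, Sym2.Mem.other hwe} ⊆ VX G X := by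
      rintro v (rfl | rfl)
      exacts [hwX, ⟨e, he, Sym2.other_mem hwe⟩]
    have := ncard_le_ncard hsub
    rw [ncard_pair (Sym2.other_ne hnd hwe).symm] at this
    rw [hX', ncard_empty] at hcard
    omega
  · have hsub : VX G (X \ {e}) ⊆ VX G X \ {w} := fun v ⟨f, hf, hvf⟩ =>
      ⟨⟨f, hf.1, hvf⟩, fun hvw => hf.2 (honly f hf.1 (hvw ▸ hvf))⟩
    have := ncard_le_ncard hsub
    have := ih _ (sdiff_singleton_ssubset.2 he) hX' fun Y hY => h Y (hY.trans sdiff_subset)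
    rw [ncard_sdiff_singleton_of_mem hwX] at *
    have := (ncard_pos (toFinite _)).2 ⟨w, hwX⟩
    omega

/-- A minimal nonempty subgraph of minimum degree two is a cycle: a vertex of degree three in it
would leave too many edges for the forest obtained by deleting one of its edges. -/
lemma exists_isCycle_of_two_le_deg (hX : X.Nonempty) (h : ∀ v ∈ VX G X, 2 ≤ deg G X v) :
    ∃ C ⊆ X, IsCycle G C := by
  obtain ⟨Y, hYX, ⟨hY, hYdeg⟩, hmin⟩ := exists_minimal_le_of_wellFoundedLT
    (fun Y => Y.Nonempty ∧ ∀ v ∈ VX G Y, 2 ≤ deg G Y v) X ⟨hX, h⟩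
  by_cases h3 : ∃ p ∈ VX G Y, 3 ≤ deg G Y p
  · exfalso
    obtain ⟨p, ⟨e, he, hpe⟩, hp⟩ := h3
    have hleaves : leaves G Y = ∅ :=
      eq_empty_of_forall_notMem fun v hv => by
        have := hYdeg v (mem_VX_of_mem_leaves hv); rw [hv] at this; omega
    have hcount := two_mul_ncard_VX_add_le G Y
    have hbranch := (ncard_pos (toFinite _)).2 (⟨p, hp⟩ : {v | 3 ≤ deg G Y v}.Nonempty)
    have hVY := (ncard_pos (toFinite _)).2 (⟨p, e, he, hpe⟩ : (VX G Y).Nonempty)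
    rw [hleaves, ncard_empty] at hcount
    have hcard := ncard_sdiff_singleton_add_one he
    obtain hY' | hY' := (Y \ {e}).eq_empty_or_nonempty
    · rw [hY', ncard_empty] at hcard
      omega
    · have := ncard_add_one_le_of_forall_leaves_nonempty (G := G) hY' fun Z hZ hZne => by
        by_contra hZl
        have hZ2 : ∀ v ∈ VX G Z, 2 ≤ deg G Z v := fun v hv => by
          have := deg_pos_iff.2 hv
          have : deg G Z v ≠ 1 := fun h1 => hZl ⟨v, h1⟩
          omega
        exact (hZ (hmin ⟨hZne, hZ2⟩ (hZ.trans sdiff_subset) he)).2 rfl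
      have := ncard_le_ncard (VX_mono (G := G) (sdiff_subset (s := Y) (t := {e})))
      omega
  · push Not at h3
    obtain ⟨e, he⟩ := hY
    refine ⟨component G Y e, component_subset.trans hYX, ⟨e, mem_component_self he⟩,
      connOn_component, fun v hv => ?_⟩
    have hvY := VX_mono component_subset hv
    have := hYdeg v hvY
    have := h3 v hvY
    rw [deg_component hv]
    omega

lemma ncard_add_one_le_of_acyclic (hA : Acyclic G X) (hX : X.Nonempty) :
    X.ncard + 1 ≤ (VX G X).ncard :=
  ncard_add_one_le_of_forall_leaves_nonempty hX fun Y hY hYne => by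
    by_contra hl
    obtain ⟨C, hCY, hC⟩ := exists_isCycle_of_two_le_deg (G := G) hYne fun v hv => by
      have := deg_pos_iff.2 hv
      have : deg G Y v ≠ 1 := fun h1 => hl ⟨v, h1⟩
      omega
    exact hA C (hCY.trans hY) hC

lemma ConnOn.ncard_VX_le_of_isCycle (hX : ConnOn G X) (hC : IsCycle G C) (hCX : C ⊆ X) :
    (VX G X).ncard ≤ X.ncard := by
  induction X using WellFoundedLT.induction with
  | _ X ih =>
  by_cases hmin : ∀ v ∈ VX G X, 2 ≤ deg G X v
  · have hleaves : leaves G X = ∅ :=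
      eq_empty_of_forall_notMem fun v hv => by
        have := hmin v (mem_VX_of_mem_leaves hv); rw [hv] at this; omega
    have := two_mul_ncard_VX_add_le G X
    rw [hleaves, ncard_empty] at this
    omega
  push Not at hmin
  obtain ⟨w, ⟨e, he, hwe⟩, hw⟩ := hmin
  have hw1 : deg G X w = 1 := by have := deg_pos_iff.2 ⟨e, he, hwe⟩; omega
  have heC : e ∉ C := fun heC => by
    have := hC.2.2 w ⟨e, heC, hwe⟩
    have := deg_mono (G := G) (v := w) hCX
    omega
  obtain ⟨c, hc⟩ := hC.1
  have hce : c ≠ e := fun h => heC (h ▸ hc)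
  have hCX' : C ⊆ X \ {e} := fun x hx => ⟨hCX hx, fun h => heC (h ▸ hx)⟩
  have := ih _ (sdiff_singleton_ssubset.2 he) (hX.diff_singleton_of_deg_eq_one he hwe hw1) hCX'
  have := ncard_le_ncard (hX.VX_subset_insert_of_deg_eq_one he hwe hw1 (hCX hc) hce)
  have := ncard_insert_le w (VX G (X \ {e}))
  have := ncard_sdiff_singleton_add_one he
  omega

lemma twoCycles_of_ncard_VX_lt (h : (VX G X).ncard < X.ncard) : TwoCycles G X := by
  have hX : X.Nonempty := nonempty_of_ncard_ne_zero (by omega)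
  obtain ⟨C, hCX, hC⟩ : ∃ C ⊆ X, IsCycle G C := by
    by_contra! hA
    have := ncard_add_one_le_of_acyclic (fun C hCX => hA C hCX) hX
    omega
  obtain ⟨e, he⟩ := hC.1
  have hcard := ncard_sdiff_singleton_add_one (hCX he)
  have hVX := ncard_le_ncard (VX_mono (G := G) (sdiff_subset (s := X) (t := {e})))
  obtain hX' | hX' := (X \ {e}).eq_empty_or_nonempty
  · have := (ncard_pos (toFinite _)).2 (⟨_, e, hCX he, Sym2.out_fst_mem _⟩ : (VX G X).Nonempty)
    rw [hX', ncard_empty] at hcard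
    omega
  obtain ⟨D, hDX, hD⟩ : ∃ D ⊆ X \ {e}, IsCycle G D := by
    by_contra! hA
    have := ncard_add_one_le_of_acyclic (fun D hDX => hA D hDX) hX'
    omega
  exact ⟨C, D, hCX, hDX.trans sdiff_subset, hC, hD, fun hCD => (hDX (hCD ▸ he)).2 rfl⟩

/-- Deleting an edge of one cycle that is not on the other would leave a connected cyclic edge
set on the same vertices with fewer edges than vertices. -/
lemma ConnOn.eq_of_isCycle (hX : ConnOn G X) (hcard : X.ncard ≤ (VX G X).ncard)
    (hC : IsCycle G C) (hCX : C ⊆ X) (hD : IsCycle G D) (hDX : D ⊆ X) : C = D := by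
  have key : ∀ {C D}, IsCycle G C → C ⊆ X → IsCycle G D → D ⊆ X → C ⊆ D := by
    intro C D hC hCX hD hDX e he
    by_contra heD
    obtain ⟨f, hf⟩ := hD.1
    have hfe : f ≠ e := fun h => heD (h ▸ hf)
    have hDX' : D ⊆ X \ {e} := fun x hx => ⟨hDX hx, fun h => heD (h ▸ hx)⟩
    have := (hX.diff_singleton_of_isCycle hC hCX he).ncard_VX_le_of_isCycle hD hDX'
    rw [hX.VX_diff_singleton_of_isCycle hC hCX he (hDX hf) hfe] at this
    have := ncard_sdiff_singleton_add_one (hCX he)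
    omega
  exact Subset.antisymm (key hC hCX hD hDX) (key hD hDX hC hCX)

end Finite

/-! ### Pseudoforests -/

/-- Equivalently, every component of `G[X]` has at most one cycle. These are the independent sets of
the bicircular matroid. -/
def IsPseudoforest (G : MGraph V E) (X : Set E) : Prop :=
  ∀ Y ⊆ X, ConnOn G Y → ¬TwoCycles G Y

lemma IsPseudoforest.mono (h : IsPseudoforest G Y) (hXY : X ⊆ Y) : IsPseudoforest G X :=
  fun Z hZX => h Z (hZX.trans hXY)

lemma Acyclic.isPseudoforest (h : Acyclic G X) : IsPseudoforest G X :=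
  fun _ hYX _ ⟨C, _, hCY, _, hC, _⟩ => h C (hCY.trans hYX) hC

lemma IsPseudoforest.union (hI : IsPseudoforest G I) (hJ : IsPseudoforest G J)
    (hIJ : Disjoint (VX G I) (VX G J)) : IsPseudoforest G (I ∪ J) := fun Y hY hYc =>
  (hYc.subset_or_subset hY hIJ).elim (hI Y · hYc) (hJ Y · hYc)

section Finite

variable [Finite E]

lemma isPseudoforest_iff_forall_not_isBicycle :
    IsPseudoforest G X ↔ ∀ Y ⊆ X, ¬IsBicycle G Y := by
  refine ⟨fun h Y hYX hY => h Y hYX hY.1.1 hY.1.2, fun h Y hYX hY hY2 => ?_⟩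
  obtain ⟨Z, hZY, hZ, hmin⟩ := exists_minimal_le_of_wellFoundedLT
    (fun Z => ConnOn G Z ∧ TwoCycles G Z) Y ⟨hY, hY2⟩
  exact h Z (hZY.trans hYX) ⟨hZ, fun W hWZ hW => hWZ.2 (hmin hW hWZ.1)⟩

variable [Finite V]

lemma IsPseudoforest.ncard_le (h : IsPseudoforest G X) : X.ncard ≤ (VX G X).ncard := by
  induction X using induction_on_components (G := G) with
  | empty => simp
  | step X e _ ih =>
    have hK : (component G X e).ncard ≤ (VX G (component G X e)).ncard := by
      by_contra! hlt
      exact h _ component_subset connOn_component (twoCycles_of_ncard_VX_lt hlt)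
    have := ih (h.mono sdiff_subset)
    have := ncard_VX_component_add (G := G) (X := X) e
    have := ncard_sdiff_add_ncard_of_subset (component_subset (G := G) (X := X) (e := e))
    omega

/-- A minimal connected spanning subgraph of `K` that keeps a cycle has exactly one cycle. -/
lemma ConnOn.exists_isPseudoforest_of_isCycle (hK : ConnOn G K) (hC : IsCycle G C)
    (hCK : C ⊆ K) : ∃ I ⊆ K, IsPseudoforest G I ∧ (VX G K).ncard ≤ I.ncard := by
  obtain ⟨Y, hYK, ⟨hY, hYV, D, hDY, hD⟩, hmin⟩ := exists_minimal_le_of_wellFoundedLT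
    (fun Y => ConnOn G Y ∧ VX G Y = VX G K ∧ ∃ D ⊆ Y, IsCycle G D) K ⟨hK, rfl, C, hCK, hC⟩
  have hle : Y.ncard ≤ (VX G Y).ncard := by
    by_contra! hlt
    obtain ⟨C₁, C₂, h₁, h₂, hC₁, hC₂, hne⟩ := twoCycles_of_ncard_VX_lt hlt
    have key : ∀ {C₁ C₂}, C₁ ⊆ Y → C₂ ⊆ Y → IsCycle G C₁ → IsCycle G C₂ → C₁ ⊆ C₂ := by
      intro C₁ C₂ h₁ h₂ hC₁ hC₂ e he
      by_contra he₂
      obtain ⟨f, hf⟩ := hC₂.1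
      have hfe : f ≠ e := fun h => he₂ (h ▸ hf)
      have hC₂' : C₂ ⊆ Y \ {e} := fun x hx => ⟨h₂ hx, fun h => he₂ (h ▸ hx)⟩
      have := hmin (y := Y \ {e}) ⟨hY.diff_singleton_of_isCycle hC₁ h₁ he,
        by rw [hY.VX_diff_singleton_of_isCycle hC₁ h₁ he (h₂ hf) hfe, hYV], C₂, hC₂', hC₂⟩
        sdiff_subset (h₁ he)
      exact this.2 rfl
    exact hne (Subset.antisymm (key h₁ h₂ hC₁ hC₂) (key h₂ h₁ hC₂ hC₁))
  refine ⟨Y, hYK, fun Z hZY hZ ⟨C₁, C₂, h₁, h₂, hC₁, hC₂, hne⟩ => hne ?_, ?_⟩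
  · exact hY.eq_of_isCycle hle hC₁ (h₁.trans hZY) hC₂ (h₂.trans hZY)
  · rw [← hYV]
    exact hY.ncard_VX_le_of_isCycle hD hDY

lemma exists_isPseudoforest_of_forall_component (S : Set V) (hX : ∀ e ∈ X,
    ∃ I ⊆ component G X e, IsPseudoforest G I ∧
      2 * (VX G (component G X e)).ncard ≤ 2 * I.ncard + (S ∩ VX G (component G X e)).ncard) :
    ∃ I ⊆ X, IsPseudoforest G I ∧ 2 * (VX G X).ncard ≤ 2 * I.ncard + (S ∩ VX G X).ncard := by
  induction X using induction_on_components (G := G) with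
  | empty => exact ⟨∅, subset_rfl, fun Y hY => by simp [subset_empty_iff.1 hY, TwoCycles,
      IsCycle], by simp [VX]⟩
  | step X e he ih =>
    obtain ⟨I, hIK, hI, hIc⟩ := hX e he
    obtain ⟨J, hJR, hJ, hJc⟩ := ih fun f hf => by
      rw [component_diff_component hf]
      exact hX f hf.1
    refine ⟨I ∪ J, union_subset (hIK.trans component_subset) (hJR.trans sdiff_subset),
      hI.union hJ (disjoint_VX_component_diff.mono (VX_mono hIK) (VX_mono hJR)), ?_⟩
    have hIJ : Disjoint I J := disjoint_sdiff_right.mono hIK hJR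
    have hS : (S ∩ VX G X).ncard = (S ∩ VX G (component G X e)).ncard +
        (S ∩ VX G (X \ component G X e)).ncard := by
      rw [VX_component_union_diff e, inter_union_distrib_left, ncard_union_eq
        (disjoint_VX_component_diff.mono inter_subset_right inter_subset_right)]
    rw [ncard_union_eq hIJ, hS, ← ncard_VX_component_add e]
    omega

lemma exists_isPseudoforest_two_mul_ncard_VX_le (G : MGraph V E) (X : Set E) :
    ∃ I ⊆ X, IsPseudoforest G I ∧ 2 * (VX G X).ncard ≤ 2 * I.ncard + (leaves G X).ncard := by
  obtain ⟨I, hIX, hI, hIc⟩ := exists_isPseudoforest_of_forall_component (G := G) (X := X)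
    (leaves G X) fun e he => by
    by_cases hK : Acyclic G (component G X e)
    · refine ⟨_, subset_rfl, hK.isPseudoforest, ?_⟩
      have hleaves : leaves G (component G X e) ⊆ leaves G X ∩ VX G (component G X e) :=
        fun v hv => ⟨(deg_component (mem_VX_of_mem_leaves hv)).symm.trans hv,
          mem_VX_of_mem_leaves hv⟩
      have := ncard_le_ncard hleaves
      have := two_mul_ncard_VX_add_le G (component G X e)
      omega
    · simp only [Acyclic, not_forall, not_not] at hK
      obtain ⟨C, hCK, hC⟩ := hK
      obtain ⟨I, hIK, hI, hIc⟩ := connOn_component.exists_isPseudoforest_of_isCycle hC hCK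
      exact ⟨I, hIK, hI, by omega⟩
  have := ncard_le_ncard (inter_subset_left (s := leaves G X) (t := VX G X))
  exact ⟨I, hIX, hI, by omega⟩

lemma exists_isPseudoforest_ncard_VX_le (hX : ∀ e ∈ X, ∃ C ⊆ component G X e, IsCycle G C) :
    ∃ I ⊆ X, IsPseudoforest G I ∧ (VX G X).ncard ≤ I.ncard := by
  obtain ⟨I, hIX, hI, hIc⟩ := exists_isPseudoforest_of_forall_component (G := G) (X := X) ∅
    fun e he => by
    obtain ⟨C, hCK, hC⟩ := hX e he
    obtain ⟨I, hIK, hI, hIc⟩ := connOn_component.exists_isPseudoforest_of_isCycle hC hCK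
    exact ⟨I, hIK, hI, by omega⟩
  exact ⟨I, hIX, hI, by simpa using hIc⟩

end Finite

/-! ### The bicircular matroid -/

section Matroid

variable {α : Type*} {M : Matroid α} {C K I X : Set α} {n : ℕ}

lemma circ_iff_isCircuit : Circ M C ↔ M.IsCircuit C :=
  isCircuit_iff_forall_ssubset.symm

lemma cocirc_iff_isCocircuit : Cocirc M K ↔ M.IsCocircuit K :=
  circ_iff_isCircuit

lemma rk_le_of_forall (h : ∀ I, M.Indep I → I ⊆ X → I.ncard ≤ n) : rk M X ≤ n :=
  csSup_le ⟨0, ∅, M.empty_indep, empty_subset X, (ncard_empty α).symm⟩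
    fun _ ⟨I, hI, hIX, hn⟩ => hn ▸ h I hI hIX

lemma ncard_le_rk [Finite α] (hI : M.Indep I) (hIX : I ⊆ X) : I.ncard ≤ rk M X :=
  le_csSup ⟨Nat.card α, fun _ ⟨J, _, _, hn⟩ => hn ▸ ncard_le_card J⟩ ⟨I, hI, hIX, rfl⟩

end Matroid

variable {M : Matroid E}

lemma IsBicircOf.exists_isBicycle_mem [Nontrivial E] (hM : IsBicircOf G M) (hconn : MConn M)
    (e : E) : ∃ Z, IsBicycle G Z ∧ e ∈ Z := by
  obtain ⟨f, hfe⟩ := exists_ne e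
  obtain ⟨Z, hZ, heZ, -⟩ := hconn.2 e (hM.1 ▸ mem_univ e) f (hM.1 ▸ mem_univ f) hfe.symm
  exact ⟨Z, (hM.2 Z).1 hZ, heZ⟩

section Finite

variable [Finite E]

lemma IsBicycle.two_le_deg (hZ : IsBicycle G Z) (hv : v ∈ VX G Z) : 2 ≤ deg G Z v := by
  by_contra! hlt
  obtain ⟨e, he, hve⟩ := hv
  have h1 : deg G Z v = 1 := by have := deg_pos_iff.2 ⟨e, he, hve⟩; omega
  obtain ⟨⟨hZc, C₁, C₂, h₁, h₂, hC₁, hC₂, hne⟩, hmin⟩ := hZ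
  have avoid : ∀ {C}, C ⊆ Z → IsCycle G C → C ⊆ Z \ {e} := fun hCZ hC x hx =>
    ⟨hCZ hx, fun hxe => by
      rw [mem_singleton_iff] at hxe
      have := hC.2.2 v ⟨x, hx, hxe ▸ hve⟩
      have := deg_mono (G := G) (v := v) hCZ
      omega⟩
  exact hmin _ (sdiff_singleton_ssubset.2 he) ⟨hZc.diff_singleton_of_deg_eq_one he hve h1,
    C₁, C₂, avoid h₁ hC₁, avoid h₂ hC₂, hC₁, hC₂, hne⟩

lemma leaves_univ_eq_empty (h : ∀ e, ∃ Z, IsBicycle G Z ∧ e ∈ Z) : leaves G univ = ∅ :=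
  eq_empty_of_forall_notMem fun v hv => by
    obtain ⟨e, -, hve⟩ := mem_VX_of_mem_leaves hv
    obtain ⟨Z, hZ, heZ⟩ := h e
    have := hZ.two_le_deg ⟨e, heZ, hve⟩
    have := deg_mono (G := G) (v := v) (subset_univ Z)
    rw [mem_leaves] at hv
    omega

lemma IsBicircOf.indep_iff (hM : IsBicircOf G M) : M.Indep I ↔ IsPseudoforest G I := by
  rw [indep_iff_forall_subset_not_isCircuit (hM.1 ▸ subset_univ I),
    isPseudoforest_iff_forall_not_isBicycle]
  simp only [← circ_iff_isCircuit, hM.2]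

/-- The two edges at a vertex of degree two form a series pair: a bicycle has minimum degree two,
so it contains both or neither. -/
lemma IsBicircOf.cocirc_pair (hM : IsBicircOf G M) (hcov : ∀ e, ∃ Z, IsBicycle G Z ∧ e ∈ Z)
    (hef : e ≠ f) (hw : ∀ g, w ∈ G.ends g ↔ g = e ∨ g = f) (hnde : ¬(G.ends e).IsDiag)
    (hndf : ¬(G.ends f).IsDiag) : Cocirc M {e, f} := by
  have other : ∀ {a b}, (∀ g, w ∈ G.ends g → g = a ∨ g = b) → w ∈ G.ends a →
      ¬(G.ends a).IsDiag → ∀ Z, IsBicycle G Z → a ∈ Z → b ∈ Z := by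
    intro a b hab hwa hnda Z hZ haZ
    obtain ⟨g, hgZ, hga, hwg⟩ := exists_ne_of_two_le_deg (hZ.two_le_deg ⟨a, haZ, hwa⟩) hnda
    exact ((hab g hwg).resolve_left hga) ▸ hgZ
  have hfe : ∀ Z, IsBicycle G Z → e ∈ Z → f ∈ Z :=
    other (fun g hg => (hw g).1 hg) ((hw e).2 (Or.inl rfl)) hnde
  have hef' : ∀ Z, IsBicycle G Z → f ∈ Z → e ∈ Z :=
    other (fun g hg => ((hw g).1 hg).symm) ((hw f).2 (Or.inr rfl)) hndf
  have avoid : ∀ x, ∃ B, M.IsBase B ∧ x ∉ B := fun x => by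
    obtain ⟨Z, hZ, hxZ⟩ := hcov x
    have hnc := (circ_iff_isCircuit.1 ((hM.2 Z).2 hZ)).not_isColoop_of_mem hxZ
    simpa [isColoop_iff_forall_mem_isBase] using hnc
  rw [cocirc_iff_isCocircuit, isCocircuit_iff_minimal]
  refine ⟨fun B hB => ?_, fun Y hY hYef => ?_⟩
  · by_contra hBef
    have heB : e ∉ B := fun h => hBef ⟨e, Or.inl rfl, h⟩
    have hfB : f ∉ B := fun h => hBef ⟨f, Or.inr rfl, h⟩
    have hC := hB.fundCircuit_isCircuit (hM.1 ▸ mem_univ e) heB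
    have := M.fundCircuit_subset_insert e B
      (hfe _ ((hM.2 _).1 (circ_iff_isCircuit.2 hC)) (M.mem_fundCircuit e B))
    exact this.elim (fun h => hef h.symm) hfB
  · have hmem : ∀ {a b}, Y ⊆ {a, b} → a ∉ Y → False := fun {a b} hYab haY => by
      obtain ⟨B, hB, hbB⟩ := avoid b
      obtain ⟨x, hxY, hxB⟩ := hY B hB
      rcases hYab hxY with rfl | rfl
      exacts [haY hxY, hbB hxB]
    rintro x (rfl | rfl)
    · exact by_contra (hmem hYef)
    · exact by_contra (hmem (pair_comm x e ▸ hYef))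

variable [Finite V]

lemma IsBicircOf.rkM_le (hM : IsBicircOf G M) : rkM M ≤ (VX G univ).ncard :=
  rk_le_of_forall fun I hI _ =>
    (hM.indep_iff.1 hI).ncard_le.trans (ncard_le_ncard (VX_mono (subset_univ I)))

lemma IsBicircOf.two_mul_ncard_VX_le_rk (hM : IsBicircOf G M) (X : Set E) :
    2 * (VX G X).ncard ≤ 2 * rk M X + (leaves G X).ncard := by
  obtain ⟨I, hIX, hI, hIc⟩ := exists_isPseudoforest_two_mul_ncard_VX_le G X
  have := ncard_le_rk (hM.indep_iff.2 hI) hIX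
  omega

lemma IsBicircOf.ncard_VX_le_rk (hM : IsBicircOf G M)
    (hX : ∀ e ∈ X, ∃ C ⊆ component G X e, IsCycle G C) : (VX G X).ncard ≤ rk M X := by
  obtain ⟨I, hIX, hI, hIc⟩ := exists_isPseudoforest_ncard_VX_le hX
  exact hIc.trans (ncard_le_rk (hM.indep_iff.2 hI) hIX)

end Finite

/-! ### Two-separations -/

lemma IsBicircOf.VX_component_inter_nonempty (hM : IsBicircOf G M) (hconn : MConn M)
    (he : e ∈ A) (hA : Aᶜ.Nonempty) :
    (VX G (component G A e) ∩ (VX G A ∩ VX G Aᶜ)).Nonempty := by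
  obtain ⟨f, hf⟩ := hA
  obtain ⟨Z, hZ, heZ, hfZ⟩ :=
    hconn.2 e (hM.1 ▸ mem_univ e) f (hM.1 ▸ mem_univ f) fun h => hf (h ▸ he)
  obtain ⟨v, hvK, hvZ⟩ := ((hM.2 Z).1 hZ).1.1.VX_component_inter_nonempty heZ he hfZ hf
  exact ⟨v, hvK, VX_mono component_subset hvK, VX_mono (fun x hx => hx.2) hvZ⟩

section Finite

variable [Finite E]

lemma leaves_subset_VX_inter_VX_compl (h : leaves G univ = ∅) (A : Set E) :
    leaves G A ⊆ VX G A ∩ VX G Aᶜ := fun v hv =>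
  ⟨mem_VX_of_mem_leaves hv, by_contra fun hvB => by
    have hdeg := deg_union_of_disjoint (G := G) (v := v) (disjoint_compl_right (a := A))
    rw [union_compl_self, hv, deg_eq_zero_iff.2 hvB] at hdeg
    exact (h ▸ (hdeg : v ∈ leaves G univ) : v ∈ (∅ : Set V))⟩

lemma IsBicircOf.disjoint_leaves (hM : IsBicircOf G M) (hcov : ∀ e, ∃ Z, IsBicycle G Z ∧ e ∈ Z)
    (hser : ∀ S : Set E, Cocirc M S → S.ncard = 2 → S ⊆ A ∨ S ⊆ Aᶜ) :
    Disjoint (leaves G A) (leaves G Aᶜ) := disjoint_left.2 fun w hwA hwB => by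
  obtain ⟨e, he, hwe⟩ := mem_VX_of_mem_leaves hwA
  obtain ⟨f, hf, hwf⟩ := mem_VX_of_mem_leaves hwB
  obtain ⟨honlyA, hnde⟩ := eq_of_deg_eq_one hwA he hwe
  obtain ⟨honlyB, hndf⟩ := eq_of_deg_eq_one hwB hf hwf
  have hef : e ≠ f := fun h => hf (h ▸ he)
  have hw : ∀ g, w ∈ G.ends g ↔ g = e ∨ g = f := fun g =>
    ⟨fun hwg => (em (g ∈ A)).imp (honlyA g · hwg) (honlyB g · hwg),
      by rintro (rfl | rfl) <;> assumption⟩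
  rcases hser _ (hM.cocirc_pair hcov hef hw hnde hndf) (ncard_pair hef) with h | h
  · exact hf (h (Or.inr rfl))
  · exact h (Or.inl rfl) he

variable [Finite V]

/-- A tree has at least two leaves, more if it has a vertex of degree three; here its leaves fill
the two-vertex set `S`, which every component of `G[X]` meets, so `X` is this tree and a path. -/
lemma isPathBtw_of_acyclic_component {S : Set V} (hS : S.ncard = 2)
    (hleaves : leaves G X ⊆ S) (hmeet : ∀ f ∈ X, (VX G (component G X f) ∩ S).Nonempty)
    (he : e ∈ X) (hK : Acyclic G (component G X e)) : ∃ u v, IsPathBtw G X u v ∧ S = {u, v} := by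
  have hKne : (component G X e).Nonempty := ⟨e, mem_component_self he⟩
  have hacyc := ncard_add_one_le_of_acyclic hK hKne
  have hcount := two_mul_ncard_VX_add_le G (component G X e)
  have hKleaves : leaves G (component G X e) ⊆ S := fun v hv =>
    hleaves ((deg_component (mem_VX_of_mem_leaves hv)).symm.trans hv)
  have := ncard_le_ncard hKleaves
  have hLS : leaves G (component G X e) = S := eq_of_subset_of_ncard_le hKleaves (by omega)
  have hbranch : {v | 3 ≤ deg G (component G X e) v}.ncard = 0 := by omega
  have hKX : component G X e = X := Subset.antisymm component_subset fun f hf => by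
    obtain ⟨v, hvf, hvS⟩ := hmeet f hf
    rw [← hLS] at hvS
    exact component_eq_of_mem_VX (mem_VX_of_mem_leaves hvS) hvf ▸ mem_component_self hf
  obtain ⟨u, v, huv, rfl⟩ := ncard_eq_two.1 hS
  refine ⟨u, v, hKX ▸ ⟨hKne, connOn_component, hK, huv, ?_, ?_, fun w _ => ?_⟩, rfl⟩
  · exact (hLS ▸ Or.inl rfl : u ∈ leaves G (component G X e))
  · exact (hLS ▸ Or.inr rfl : v ∈ leaves G (component G X e))
  · by_contra! hw
    exact (ncard_pos (toFinite _)).2 ⟨w, hw⟩ |>.ne' hbranch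

lemma IsBicircOf.isPathBtw_of_acyclic_component (hM : IsBicircOf G M) (hconn : MConn M)
    (hA : Aᶜ.Nonempty) (hleaves : leaves G A ⊆ VX G A ∩ VX G Aᶜ)
    (h2 : (VX G A ∩ VX G Aᶜ).ncard = 2) (he : e ∈ A) (hK : Acyclic G (component G A e)) :
    ∃ u v, IsPathBtw G A u v ∧ VX G A ∩ VX G Aᶜ = {u, v} :=
  Bicirc.isPathBtw_of_acyclic_component h2 hleaves
    (fun _ hf => hM.VX_component_inter_nonempty hconn hf hA) he hK

/-- Adding `2 |V(X)| ≤ 2 r(X) + |leaves X|` over both sides gives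
`2 |V| + 2 |∂| ≤ 2 r(M) + 2 + |∂| ≤ 2 |V| + 2 + |∂|`, where `∂` is the boundary. -/
lemma IsBicircOf.ncard_VX_inter_VX_compl_le_two (hM : IsBicircOf G M)
    (hrk : rk M A + rk M Aᶜ ≤ rkM M + 1) (hLA : leaves G A ⊆ VX G A ∩ VX G Aᶜ)
    (hLB : leaves G Aᶜ ⊆ VX G A ∩ VX G Aᶜ) (hdisj : Disjoint (leaves G A) (leaves G Aᶜ)) :
    (VX G A ∩ VX G Aᶜ).ncard ≤ 2 := by
  have hA := hM.two_mul_ncard_VX_le_rk A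
  have hB := hM.two_mul_ncard_VX_le_rk Aᶜ
  have hE := hM.rkM_le
  have hVX := ncard_union_add_ncard_inter (VX G A) (VX G Aᶜ)
  rw [← VX_union, union_compl_self] at hVX
  have hL := ncard_le_ncard (union_subset hLA hLB)
  rw [ncard_union_eq hdisj] at hL
  omega

lemma IsBicircOf.exists_acyclic_component (hM : IsBicircOf G M)
    (hrk : rk M A + rk M Aᶜ ≤ rkM M + 1) (h2 : (VX G A ∩ VX G Aᶜ).ncard = 2) :
    (∃ e ∈ A, Acyclic G (component G A e)) ∨ ∃ e ∈ Aᶜ, Acyclic G (component G Aᶜ e) := by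
  by_contra! h
  simp only [Acyclic, not_forall, not_not, exists_prop] at h
  have hA := hM.ncard_VX_le_rk h.1
  have hB := hM.ncard_VX_le_rk h.2
  have hE := hM.rkM_le
  have hVX := ncard_union_add_ncard_inter (VX G A) (VX G Aᶜ)
  rw [← VX_union, union_compl_self] at hVX
  omega

end Finite

end Bicirc

open Bicirc in
theorem stmt18_general {V E : Type*} [Fintype V] [Fintype E] (G : MGraph V E)
    (M : Matroid E) (hM : IsBicircOf G M) (hconn : MConn M)
    (A : Set E) (hsep : TwoSep M A (M.E \ A))
    (hser : ∀ S : Set E, Cocirc M S → S.ncard = 2 → S ⊆ A ∨ S ⊆ M.E \ A) :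
    (∃ w, VX G A ∩ VX G (M.E \ A) = {w}) ∨
      (∃ u v, IsPathBtw G A u v ∧ VX G A ∩ VX G (M.E \ A) = {u, v}) ∨
      (∃ u v, IsPathBtw G (M.E \ A) u v ∧ VX G A ∩ VX G (M.E \ A) = {u, v}) := by
  rw [hM.1, ← compl_eq_univ_sdiff] at hsep hser ⊢
  obtain ⟨-, -, hA, hB, hrk⟩ := hsep
  obtain ⟨a, ha⟩ := nonempty_of_ncard_ne_zero (s := A) (by omega)
  obtain ⟨b, hb⟩ := nonempty_of_ncard_ne_zero (s := Aᶜ) (by omega)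
  have : Nontrivial E := ⟨a, b, fun h => hb (h ▸ ha)⟩
  have hcov := hM.exists_isBicycle_mem hconn
  have hLA := leaves_subset_VX_inter_VX_compl (leaves_univ_eq_empty hcov) A
  have hLB := leaves_subset_VX_inter_VX_compl (leaves_univ_eq_empty hcov) Aᶜ
  have hle := hM.ncard_VX_inter_VX_compl_le_two hrk hLA (by rwa [compl_compl, inter_comm] at hLB)
    (hM.disjoint_leaves hcov hser)
  have hpos := (ncard_pos (toFinite _)).2
    ((hM.VX_component_inter_nonempty hconn ha ⟨b, hb⟩).mono inter_subset_right)
  obtain h1 | h2 : (VX G A ∩ VX G Aᶜ).ncard = 1 ∨ (VX G A ∩ VX G Aᶜ).ncard = 2 := by omega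
  · exact Or.inl (ncard_eq_one.1 h1)
  rcases hM.exists_acyclic_component hrk h2 with ⟨e, he, hK⟩ | ⟨e, he, hK⟩
  · exact Or.inr (Or.inl (hM.isPathBtw_of_acyclic_component hconn ⟨b, hb⟩ hLA h2 he hK))
  · have := hM.isPathBtw_of_acyclic_component (A := Aᶜ) hconn ⟨a, by rwa [compl_compl]⟩ hLB
      (by rwa [compl_compl, inter_comm]) he hK
    rw [compl_compl, inter_comm] at this
    exact Or.inr (Or.inr this)

open Bicirc in
theorem stmt18 {V E : Type*} [Fintype V] [Fintype E] (G : MGraph V E)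
    (hG : GConn G) (M : Matroid E) (hM : IsBicircOf G M) (hconn : MConn M)
    (A : Set E) (hsep : TwoSep M A (M.E \ A))
    (hser : ∀ S : Set E, Cocirc M S → S.ncard = 2 → S ⊆ A ∨ S ⊆ M.E \ A) :
    (∃ w, VX G A ∩ VX G (M.E \ A) = {w}) ∨
      (∃ u v, IsPathBtw G A u v ∧ VX G A ∩ VX G (M.E \ A) = {u, v}) ∨
      (∃ u v, IsPathBtw G (M.E \ A) u v ∧ VX G A ∩ VX G (M.E \ A) = {u, v}) :=
  stmt18_general G M hM hconn A hsep hser
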